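/- Let n ≥ 1, σ : Fin n ≃ Fin n a permutation, Lˢ, Lᵗ n×n real matrices, t real, K ≥ 1. Define Ψᶻ = ∑_{k=1}^{K} ((−t)^k / k!) (Lᶻ)^k for z ∈ {s,t}, Bᶻ_{ij} = Ψ̄ − Ψᶻ_{ij} for i ≠ j and Bᶻ_{ii} = 0 (Ψ̄ a real constant), and Δ⁽ᵏ⁾_{ij} = ((Lˢ)^k)_{ij} − ((Lᵗ)^k)_{σ(i)σ(j)}. Let ε₁,…,ε_K ≥ 0 and assume that for EVERY node i and every k ∈ {1,…,K}: ∑_{j=1}^{n} (Δ⁽ᵏ⁾_{ij})² ≤ ε_k. Then the total quadratic assignment objective of the permutation matching satisfies ∑_{i=1}^{n} ∑_{j=1}^{n} (Bˢ_{ij} − Bᵗ_{σ(i)σ(j)})² ≤ n · K · ∑_{k=1}^{K} (t^k / k!)² · ε_k. -/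

import Mathlib

/-! Off the diagonal, `Bˢ_{ij} - Bᵗ_{σ(i)σ(j)}` is the difference of wavelet entries, which is the
combination `∑ₖ ((-t)^k / k!) Δ⁽ᵏ⁾_{ij}` of the `K` power differences. Cauchy–Schwarz bounds its
square by `K ∑ₖ (t^k / k!)² (Δ⁽ᵏ⁾_{ij})²`; summing over `j` and using the row bounds gives
`K ∑ₖ (t^k / k!)² εₖ` per node, and summing over the `n` nodes gives the claim. -/

open Finset Nat

section Dissimilarity

variable {R m n : Type*} [CommRing R] [LinearOrder R] [IsStrictOrderedRing R] [DecidableEq m]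
  [DecidableEq n]

theorem sq_dissimilarity_sub_le {σ : m → n} (hσ : Function.Injective σ) (c : R)
    {Ψ B : Matrix m m R} {Ψ' B' : Matrix n n R}
    (hB : ∀ i j, B i j = if i = j then 0 else c - Ψ i j)
    (hB' : ∀ i j, B' i j = if i = j then 0 else c - Ψ' i j) (i j : m) :
    (B i j - B' (σ i) (σ j)) ^ 2 ≤ (Ψ i j - Ψ' (σ i) (σ j)) ^ 2 := by
  by_cases hij : i = j
  · simp [hB, hB', hij, sq_nonneg]
  · rw [hB, hB', if_neg hij, if_neg (hσ.ne hij)]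
    exact le_of_eq (by ring)

end Dissimilarity

theorem Matrix.sum_smul_apply_sub_sum_smul_apply {R ι m n : Type*} [Ring R] (s : Finset ι)
    (c : ι → R) (A : ι → Matrix m m R) (A' : ι → Matrix n n R) (i j : m) (i' j' : n) :
    (∑ k ∈ s, c k • A k) i j - (∑ k ∈ s, c k • A' k) i' j' =
      ∑ k ∈ s, c k * (A k i j - A' k i' j') := by
  simp only [Matrix.sum_apply, Matrix.smul_apply, smul_eq_mul, mul_sub, sum_sub_distrib]

theorem sq_neg_pow_div_factorial (t : ℝ) (k : ℕ) :
    ((-t) ^ k / (k ! : ℝ)) ^ 2 = (t ^ k / (k ! : ℝ)) ^ 2 := by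
  rw [div_pow, div_pow, ← pow_mul, ← pow_mul, (even_two.mul_left k).neg_pow]

section HeatWavelet

/-- The degree-`K` Taylor polynomial of `exp (-t L)` without its constant term. -/
noncomputable def truncHeatWavelet {m : Type*} [Fintype m] [DecidableEq m] (K : ℕ) (t : ℝ)
    (L : Matrix m m ℝ) : Matrix m m ℝ :=
  ∑ k ∈ Icc 1 K, ((-t) ^ k / (k ! : ℝ)) • L ^ k

variable {m n : Type*} [Fintype m] [Fintype n] [DecidableEq m] [DecidableEq n] (K : ℕ) (t : ℝ)
  (Ls : Matrix m m ℝ) (Lt : Matrix n n ℝ) (σ : m → n)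

theorem sq_truncHeatWavelet_sub_le (i j : m) :
    (truncHeatWavelet K t Ls i j - truncHeatWavelet K t Lt (σ i) (σ j)) ^ 2 ≤
      (K : ℝ) * ∑ k ∈ Icc 1 K,
        (t ^ k / (k ! : ℝ)) ^ 2 * ((Ls ^ k) i j - (Lt ^ k) (σ i) (σ j)) ^ 2 := by
  rw [truncHeatWavelet, truncHeatWavelet, Matrix.sum_smul_apply_sub_sum_smul_apply]
  calc _ ≤ #(Icc 1 K) * ∑ k ∈ Icc 1 K,
          (((-t) ^ k / (k ! : ℝ)) * ((Ls ^ k) i j - (Lt ^ k) (σ i) (σ j))) ^ 2 :=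
        sq_sum_le_card_mul_sum_sq
    _ = _ := by simp only [Nat.card_Icc, add_tsub_cancel_right, mul_pow, sq_neg_pow_div_factorial]

theorem sum_sq_truncHeatWavelet_sub_le (ε : ℕ → ℝ) (i : m)
    (hbound : ∀ k ∈ Icc 1 K, ∑ j, ((Ls ^ k) i j - (Lt ^ k) (σ i) (σ j)) ^ 2 ≤ ε k) :
    ∑ j, (truncHeatWavelet K t Ls i j - truncHeatWavelet K t Lt (σ i) (σ j)) ^ 2 ≤
      (K : ℝ) * ∑ k ∈ Icc 1 K, (t ^ k / (k ! : ℝ)) ^ 2 * ε k :=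
  calc _ ≤ ∑ j, (K : ℝ) * ∑ k ∈ Icc 1 K,
          (t ^ k / (k ! : ℝ)) ^ 2 * ((Ls ^ k) i j - (Lt ^ k) (σ i) (σ j)) ^ 2 :=
        sum_le_sum fun j _ => sq_truncHeatWavelet_sub_le K t Ls Lt σ i j
    _ = (K : ℝ) * ∑ k ∈ Icc 1 K,
          (t ^ k / (k ! : ℝ)) ^ 2 * ∑ j, ((Ls ^ k) i j - (Lt ^ k) (σ i) (σ j)) ^ 2 := by
        simp only [mul_sum]
        exact sum_comm
    _ ≤ _ := by gcongr with k hk; exact hbound k hk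

end HeatWavelet

theorem sigma_theorem1_global_general
    (n K : ℕ)
    (σ : Equiv.Perm (Fin n)) (Ls Lt : Matrix (Fin n) (Fin n) ℝ) (t Ψbar : ℝ)
    (Ψs Ψt : Matrix (Fin n) (Fin n) ℝ)
    (hΨs : Ψs = ∑ k ∈ Finset.Icc 1 K, ((-t) ^ k / (Nat.factorial k : ℝ)) • Ls ^ k)
    (hΨt : Ψt = ∑ k ∈ Finset.Icc 1 K, ((-t) ^ k / (Nat.factorial k : ℝ)) • Lt ^ k)
    (Bs Bt : Matrix (Fin n) (Fin n) ℝ)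
    (hBs : ∀ i j : Fin n, Bs i j = if i = j then 0 else Ψbar - Ψs i j)
    (hBt : ∀ i j : Fin n, Bt i j = if i = j then 0 else Ψbar - Ψt i j)
    (Δ : ℕ → Matrix (Fin n) (Fin n) ℝ)
    (hΔ : ∀ (k : ℕ) (i j : Fin n), Δ k i j = (Ls ^ k) i j - (Lt ^ k) (σ i) (σ j))
    (ε : ℕ → ℝ)
    (hbound : ∀ i : Fin n, ∀ k ∈ Finset.Icc 1 K, ∑ j : Fin n, (Δ k i j) ^ 2 ≤ ε k) :
    ∑ i : Fin n, ∑ j : Fin n, (Bs i j - Bt (σ i) (σ j)) ^ 2 ≤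
      (n : ℝ) * (K : ℝ) * ∑ k ∈ Finset.Icc 1 K, (t ^ k / (Nat.factorial k : ℝ)) ^ 2 * ε k := by
  simp only [hΔ] at hbound
  have hrow : ∀ i, ∑ j, (Bs i j - Bt (σ i) (σ j)) ^ 2 ≤
      (K : ℝ) * ∑ k ∈ Icc 1 K, (t ^ k / (k ! : ℝ)) ^ 2 * ε k := fun i =>
    calc _ ≤ ∑ j, (Ψs i j - Ψt (σ i) (σ j)) ^ 2 :=
          sum_le_sum fun j _ => sq_dissimilarity_sub_le σ.injective Ψbar hBs hBt i j
      _ ≤ _ := hΨs ▸ hΨt ▸ sum_sq_truncHeatWavelet_sub_le K t Ls Lt σ ε i (hbound i)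
  calc _ ≤ #(univ : Finset (Fin n)) • (K * ∑ k ∈ Icc 1 K, (t ^ k / (k ! : ℝ)) ^ 2 * ε k) :=
        sum_le_card_nsmul _ _ _ fun i _ => hrow i
    _ = _ := by rw [Finset.card_univ, Fintype.card_fin, nsmul_eq_mul, mul_assoc]

/-- Summed (global) corollary of Theorem 1 of the paper: bound on the total quadratic
assignment objective of the true permutation matching. -/
theorem sigma_theorem1_global
    (n K : ℕ) (hn : 1 ≤ n) (hK : 1 ≤ K)
    (σ : Equiv.Perm (Fin n)) (Ls Lt : Matrix (Fin n) (Fin n) ℝ) (t Ψbar : ℝ)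
    (Ψs Ψt : Matrix (Fin n) (Fin n) ℝ)
    (hΨs : Ψs = ∑ k ∈ Finset.Icc 1 K, ((-t) ^ k / (Nat.factorial k : ℝ)) • Ls ^ k)
    (hΨt : Ψt = ∑ k ∈ Finset.Icc 1 K, ((-t) ^ k / (Nat.factorial k : ℝ)) • Lt ^ k)
    (Bs Bt : Matrix (Fin n) (Fin n) ℝ)
    (hBs : ∀ i j : Fin n, Bs i j = if i = j then 0 else Ψbar - Ψs i j)
    (hBt : ∀ i j : Fin n, Bt i j = if i = j then 0 else Ψbar - Ψt i j)
    (Δ : ℕ → Matrix (Fin n) (Fin n) ℝ)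
    (hΔ : ∀ (k : ℕ) (i j : Fin n), Δ k i j = (Ls ^ k) i j - (Lt ^ k) (σ i) (σ j))
    (ε : ℕ → ℝ) (hε : ∀ k ∈ Finset.Icc 1 K, 0 ≤ ε k)
    (hbound : ∀ i : Fin n, ∀ k ∈ Finset.Icc 1 K, ∑ j : Fin n, (Δ k i j) ^ 2 ≤ ε k) :
    ∑ i : Fin n, ∑ j : Fin n, (Bs i j - Bt (σ i) (σ j)) ^ 2 ≤
      (n : ℝ) * (K : ℝ) * ∑ k ∈ Finset.Icc 1 K, (t ^ k / (Nat.factorial k : ℝ)) ^ 2 * ε k :=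
  sigma_theorem1_global_general n K σ Ls Lt t Ψbar Ψs Ψt hΨs hΨt Bs Bt hBs hBt Δ hΔ ε hbound
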